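/- Two weight constraint programs are strongly equivalent if and only if they have the same SE-models. -/

import Mathlib

open scoped Classical

inductive Lit where
  | pos : ℕ → Lit
  | neg : ℕ → Lit
deriving DecidableEq

/-- A set of literals is consistent if it contains no complementary pair. -/
def Consistent (X : Set Lit) : Prop :=
  ∀ a : ℕ, ¬ (Lit.pos a ∈ X ∧ Lit.neg a ∈ X)

/-- A rule element: a literal or a literal prefixed with `not`. -/
inductive RElem where
  | pos : Lit → RElem
  | neg : Lit → RElem
deriving DecidableEq

def SatRE (X : Set Lit) : RElem → Prop
  | RElem.pos l => l ∈ X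
  | RElem.neg l => l ∉ X

/-- The literal of a rule element. -/
def reLit : RElem → Lit
  | RElem.pos l => l
  | RElem.neg l => l

/-- A weight constraint L ≤ S ≤ U, where S is a (multi)set of weight assignments
e = w (rule element, weight) and L, U are reals or ±∞. -/
structure WC where
  lb : EReal
  S : Multiset (RElem × ℝ)
  ub : EReal

/-- v(S,X): the sum of the weights of the assignments whose rule element X satisfies. -/
noncomputable def wval (X : Set Lit) (S : Multiset (RElem × ℝ)) : ℝ :=
  ((S.filter fun p => SatRE X p.1).map Prod.snd).sum

def SatWC (X : Set Lit) (C : WC) : Prop :=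
  C.lb ≤ (wval X C.S : EReal) ∧ (wval X C.S : EReal) ≤ C.ub

/-- A WCP rule C0 ← C1,...,Cn. -/
structure WRule where
  head : WC
  body : List WC

abbrev WProg := Set WRule

def isPosRE (p : RElem × ℝ) : Prop := ∃ l : Lit, p.1 = RElem.pos l

/-- In a weight constraint program, heads contain no negative rule elements. -/
def HeadPos (P : WProg) : Prop := ∀ r ∈ P, ∀ p ∈ r.head.S, isPosRE p

def SatWRule (X : Set Lit) (r : WRule) : Prop :=
  (∀ C ∈ r.body, SatWC X C) → SatWC X r.head

def SatWProg (X : Set Lit) (P : WProg) : Prop := ∀ r ∈ P, SatWRule X r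

/-- The reduct (L ≤ S)^X = L − v(S∖S', X) ≤ S', where S' is the positive part of S. -/
noncomputable def RedLS (X : Set Lit) (C : WC) : WC :=
  ⟨C.lb - (wval X (C.S.filter fun p => ¬ isPosRE p) : EReal),
    C.S.filter isPosRE, ⊤⟩

/-- The weight constraint 1 ≤ {l = 1}, representing the literal l. -/
noncomputable def litWC (l : Lit) : WC := ⟨(1 : EReal), {(RElem.pos l, (1 : ℝ))}, ⊤⟩

/-- The weight constraint 1 ≤ {not l = 1}, representing `not l`. -/
noncomputable def notWC (l : Lit) : WC := ⟨(1 : EReal), {(RElem.neg l, (1 : ℝ))}, ⊤⟩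

/-- ⊥, i.e. the weight constraint 1 ≤ {}. -/
noncomputable def botWC : WC := ⟨(1 : EReal), 0, ⊤⟩

/-- The reduct of a WCP rule with respect to X: all rules e ← (L1 ≤ S1)^X,...,(Ln ≤ Sn)^X
for head literals e with X ⊨ e and X ⊨ Si ≤ Ui for all i. -/
noncomputable def WReductRule (X : Set Lit) (r : WRule) : WProg :=
  {r' | ∃ l : Lit, (∃ w : ℝ, (RElem.pos l, w) ∈ r.head.S) ∧ l ∈ X ∧
    (∀ C ∈ r.body, (wval X C.S : EReal) ≤ C.ub) ∧
    r' = ⟨litWC l, r.body.map (RedLS X)⟩}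

noncomputable def WReductProg (X : Set Lit) (P : WProg) : WProg :=
  {r' | ∃ r ∈ P, r' ∈ WReductRule X r}

/-- X is an answer set for P if X ⊨ P and no proper subset of X satisfies P^X. -/
def AnswerSetW (X : Set Lit) (P : WProg) : Prop :=
  Consistent X ∧ SatWProg X P ∧
    ∀ Z : Set Lit, Z ⊂ X → ¬ SatWProg Z (WReductProg X P)

def SEModelW (P : WProg) (X Y : Set Lit) : Prop :=
  Consistent X ∧ Consistent Y ∧ X ⊆ Y ∧ SatWProg Y P ∧ SatWProg X (WReductProg Y P)

def StrongEqW (P Q : WProg) : Prop :=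
  ∀ R : WProg, HeadPos R →
    ∀ Y : Set Lit, AnswerSetW Y (P ∪ R) ↔ AnswerSetW Y (Q ∪ R)

/-- A weight constraint program is ¬-free if classical negation occurs nowhere in it. -/
def WProgNegFree (P : WProg) : Prop :=
  ∀ r ∈ P, (∀ p ∈ r.head.S, ∃ a : ℕ, reLit p.1 = Lit.pos a) ∧
    ∀ C ∈ r.body, ∀ p ∈ C.S, ∃ a : ℕ, reLit p.1 = Lit.pos a

def AtomsOnly (Z : Set Lit) : Prop := ∀ l ∈ Z, ∃ a, l = Lit.pos a

/-!
Answer sets of `P ∪ R` see `P` only through its SE-models: `Y` is one iff `(Y, Y)` is an SE-model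
of `P`, `Y ⊨ R`, and no SE-model `(Z, Y)` of `P` with `Z ⊊ Y` satisfies `R^Y`. So equal SE-models
give strong equivalence. Conversely, for `X ⊆ Y` take for `R` the facts `X` together with the
rules `l ← l'` for `l, l' ∈ Y \ X`. Below `Y` the only model of `R` (which is its own reduct) is
`X`, so `Y` is an answer set of `P ∪ R` iff `(Y, Y)` is an SE-model of `P` and, unless `X = Y`,
`(X, Y)` is not; strong equivalence thus transfers SE-models.
-/

noncomputable def defRule (l : Lit) (ls : List Lit) : WRule := ⟨litWC l, ls.map litWC⟩

lemma wval_singleton_pos (X : Set Lit) (l : Lit) (w : ℝ) :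
    wval X {(RElem.pos l, w)} = if l ∈ X then w else 0 := by
  simp only [wval, Multiset.filter_singleton]
  split_ifs <;> simp_all [SatRE]

lemma satWC_litWC_iff (X : Set Lit) (l : Lit) : SatWC X (litWC l) ↔ l ∈ X := by
  by_cases hl : l ∈ X <;> simp [SatWC, litWC, wval_singleton_pos, hl]

lemma redLS_litWC (Y : Set Lit) (l : Lit) : RedLS Y (litWC l) = litWC l := by
  simp [RedLS, litWC, isPosRE, wval, Multiset.filter_singleton]

lemma satWRule_defRule_iff (Z : Set Lit) (l : Lit) (ls : List Lit) :
    SatWRule Z (defRule l ls) ↔ ((∀ l' ∈ ls, l' ∈ Z) → l ∈ Z) := by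
  simp [SatWRule, defRule, satWC_litWC_iff]

lemma mem_wReductRule_defRule_iff (Y : Set Lit) (l : Lit) (ls : List Lit) (r : WRule) :
    r ∈ WReductRule Y (defRule l ls) ↔ l ∈ Y ∧ r = defRule l ls := by
  simp only [WReductRule, defRule, Set.mem_ofPred_eq, List.map_map, Function.comp_def,
    redLS_litWC, List.forall_mem_map]
  simp only [litWC, Multiset.mem_singleton, Prod.mk.injEq, RElem.pos.injEq, le_top, implies_true,
    true_and]
  constructor
  · rintro ⟨l', ⟨w, rfl, -⟩, hl, rfl⟩
    exact ⟨hl, rfl⟩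
  · rintro ⟨hl, rfl⟩
    exact ⟨l, ⟨1, rfl, rfl⟩, hl, rfl⟩

def DefiniteWithHeadsIn (Y : Set Lit) (R : WProg) : Prop :=
  ∀ r ∈ R, ∃ l ∈ Y, ∃ ls, r = defRule l ls

lemma DefiniteWithHeadsIn.wReductProg_eq {Y : Set Lit} {R : WProg}
    (hR : DefiniteWithHeadsIn Y R) : WReductProg Y R = R := by
  ext r'
  constructor
  · rintro ⟨r, hr, hr'⟩
    obtain ⟨l, -, ls, rfl⟩ := hR r hr
    rwa [((mem_wReductRule_defRule_iff Y l ls r').mp hr').2]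
  · intro hr'
    obtain ⟨l, hl, ls, rfl⟩ := hR r' hr'
    exact ⟨_, hr', (mem_wReductRule_defRule_iff Y l ls _).mpr ⟨hl, rfl⟩⟩

lemma DefiniteWithHeadsIn.headPos {Y : Set Lit} {R : WProg} (hR : DefiniteWithHeadsIn Y R) :
    HeadPos R := by
  intro r hr p hp
  obtain ⟨l, -, ls, rfl⟩ := hR r hr
  rw [Multiset.mem_singleton.mp hp]
  exact ⟨l, rfl⟩

lemma satWProg_union_iff (Z : Set Lit) (P R : WProg) :
    SatWProg Z (P ∪ R) ↔ SatWProg Z P ∧ SatWProg Z R := by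
  simp only [SatWProg, Set.mem_union, or_imp, forall_and]

lemma wReductProg_union (Y : Set Lit) (P R : WProg) :
    WReductProg Y (P ∪ R) = WReductProg Y P ∪ WReductProg Y R := by
  ext r'
  simp only [WReductProg, Set.mem_ofPred_eq, Set.mem_union, or_and_right, exists_or]

lemma satWProg_wReductProg_self (Y : Set Lit) (P : WProg) : SatWProg Y (WReductProg Y P) := by
  rintro _ ⟨r, -, l, -, hl, -, rfl⟩ -
  exact (satWC_litWC_iff Y l).mpr hl

lemma Consistent.mono {Z Y : Set Lit} (hY : Consistent Y) (h : Z ⊆ Y) : Consistent Z :=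
  fun a ha => hY a ⟨h ha.1, h ha.2⟩

lemma seModelW_iff_of_subset {P : WProg} {X Y : Set Lit} (hY : Consistent Y) (hXY : X ⊆ Y) :
    SEModelW P X Y ↔ SatWProg Y P ∧ SatWProg X (WReductProg Y P) := by
  simp [SEModelW, hY, hXY, hY.mono hXY]

lemma seModelW_self_iff {P : WProg} {Y : Set Lit} :
    SEModelW P Y Y ↔ Consistent Y ∧ SatWProg Y P := by
  simp [SEModelW, satWProg_wReductProg_self]

lemma SEModelW.self_right {P : WProg} {X Y : Set Lit} (h : SEModelW P X Y) : SEModelW P Y Y :=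
  seModelW_self_iff.mpr ⟨h.2.1, h.2.2.2.1⟩

lemma answerSetW_union_iff (P R : WProg) (Y : Set Lit) :
    AnswerSetW Y (P ∪ R) ↔ SEModelW P Y Y ∧ SatWProg Y R ∧
      ∀ Z ⊂ Y, SEModelW P Z Y → ¬ SatWProg Z (WReductProg Y R) := by
  simp only [AnswerSetW, seModelW_self_iff, wReductProg_union, satWProg_union_iff, and_assoc]
  refine and_congr_right fun hY => and_congr_right fun hYP => and_congr_right fun _ => ?_
  refine forall₂_congr fun Z hZ => ?_
  rw [seModelW_iff_of_subset hY hZ.1]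
  tauto

theorem strongEqW_of_seModelW_iff {P Q : WProg}
    (h : ∀ X Y : Set Lit, SEModelW P X Y ↔ SEModelW Q X Y) : StrongEqW P Q := by
  intro R _ Y
  simp only [answerSetW_union_iff, h]

noncomputable def factProg (X : Set Lit) : WProg := (fun l => defRule l []) '' X

noncomputable def linkProg (X Y : Set Lit) : WProg :=
  (fun p : Lit × Lit => defRule p.1 [p.2]) '' ((Y \ X) ×ˢ (Y \ X))

noncomputable def separatingProg (X Y : Set Lit) : WProg := factProg X ∪ linkProg X Y

lemma definiteWithHeadsIn_separatingProg {X Y : Set Lit} (hXY : X ⊆ Y) :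
    DefiniteWithHeadsIn Y (separatingProg X Y) := by
  rintro _ (⟨l, hl, rfl⟩ | ⟨⟨l, l'⟩, ⟨hl, -⟩, rfl⟩)
  exacts [⟨l, hXY hl, _, rfl⟩, ⟨l, hl.1, _, rfl⟩]

lemma satWProg_separatingProg_iff (Z X Y : Set Lit) :
    SatWProg Z (separatingProg X Y) ↔
      X ⊆ Z ∧ ∀ l ∈ Y \ X, ∀ l' ∈ Y \ X, l' ∈ Z → l ∈ Z := by
  rw [separatingProg, satWProg_union_iff]
  simp only [factProg, linkProg, SatWProg, Set.forall_mem_image, Set.forall_prod_set,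
    satWRule_defRule_iff, List.mem_singleton, forall_eq, List.not_mem_nil, IsEmpty.forall_iff,
    implies_true, forall_const]
  rfl

lemma satWProg_separatingProg_iff_eq {X Y Z : Set Lit} (hXY : X ⊆ Y) (hZY : Z ⊂ Y) :
    SatWProg Z (separatingProg X Y) ↔ Z = X := by
  rw [satWProg_separatingProg_iff]
  constructor
  · rintro ⟨hXZ, hlink⟩
    refine Set.Subset.antisymm ?_ hXZ
    intro l' hl'Z
    by_contra hl'X
    have hl' : l' ∈ Y \ X := ⟨hZY.1 hl'Z, hl'X⟩
    refine hZY.2 fun l hl => ?_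
    by_cases hlX : l ∈ X
    · exact hXZ hlX
    · exact hlink l ⟨hl, hlX⟩ l' hl' hl'Z
  · rintro rfl
    exact ⟨subset_rfl, fun _ _ l' hl' hl'X => absurd hl'X hl'.2⟩

lemma answerSetW_union_separatingProg_iff (P : WProg) {X Y : Set Lit} (hXY : X ⊆ Y) :
    AnswerSetW Y (P ∪ separatingProg X Y) ↔ SEModelW P Y Y ∧ (SEModelW P X Y → X = Y) := by
  have hR := definiteWithHeadsIn_separatingProg hXY
  rw [answerSetW_union_iff, hR.wReductProg_eq]
  have hYR : SatWProg Y (separatingProg X Y) :=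
    (satWProg_separatingProg_iff Y X Y).mpr ⟨hXY, fun l hl _ _ _ => hl.1⟩
  simp only [hYR, true_and]
  refine and_congr_right fun _ => ⟨fun hmin hX => ?_, fun hX Z hZY hZ hZR => ?_⟩
  · by_contra hne
    exact hmin X (hXY.ssubset_of_ne hne) hX
      ((satWProg_separatingProg_iff_eq hXY (hXY.ssubset_of_ne hne)).mpr rfl)
  · obtain rfl := (satWProg_separatingProg_iff_eq hXY hZY).mp hZR
    exact hZY.ne (hX hZ)

theorem seModelW_iff_of_strongEqW {P Q : WProg} (h : StrongEqW P Q) (X Y : Set Lit) :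
    SEModelW P X Y ↔ SEModelW Q X Y := by
  have hsep : ∀ {X}, X ⊆ Y →
      (SEModelW P Y Y ∧ (SEModelW P X Y → X = Y) ↔ SEModelW Q Y Y ∧ (SEModelW Q X Y → X = Y)) :=
    fun hXY => by
      rw [← answerSetW_union_separatingProg_iff P hXY, ← answerSetW_union_separatingProg_iff Q hXY]
      exact h _ (definiteWithHeadsIn_separatingProg hXY).headPos Y
  have hYY : SEModelW P Y Y ↔ SEModelW Q Y Y := by simpa using hsep subset_rfl
  by_cases hXY : X ⊆ Y
  · rcases eq_or_ne X Y with rfl | hne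
    · exact hYY
    · have := hsep hXY
      have hP := @SEModelW.self_right P X Y
      have hQ := @SEModelW.self_right Q X Y
      tauto
  · exact iff_of_false (fun hP => hXY hP.2.2.1) (fun hQ => hXY hQ.2.2.1)

theorem stmt13_general (P Q : WProg) :
    StrongEqW P Q ↔ ∀ X Y : Set Lit, SEModelW P X Y ↔ SEModelW Q X Y :=
  ⟨seModelW_iff_of_strongEqW, strongEqW_of_seModelW_iff⟩

/-- weight constraint programs are strongly equivalent iff they have
the same SE-models. -/
theorem stmt13 (P Q : WProg) (hP : HeadPos P) (hQ : HeadPos Q) :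
    StrongEqW P Q ↔ ∀ X Y : Set Lit, SEModelW P X Y ↔ SEModelW Q X Y :=
  stmt13_general P Q
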